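/- arXiv:1508.06514 — 2 statements merged into one kernel-verified Lean document; each statement's English description precedes it below -/
import Mathlib

section
/- Let $f_k : [a,b] \to X$ ($X$ a complete metric space) be weighted $\alpha\beta$-equi-statistically convergent of order $\theta$ to $f$ with a bounded weight sequence $(t_n)$ ($0 < L \le t_n \le M$). If each $f_k$ is continuous at a point $c \in [a,b]$, then $f$ is continuous at $c$. -/
open Filter Topology Set

/-- Weighted sum over the indices in `[A n, B n]`. -/
noncomputable def Tab (t A B : ℕ → ℝ) (n : ℕ) : ℝ :=
  ∑ k ∈ Finset.Icc ⌈A n⌉₊ ⌊B n⌋₊, t k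

/-- Weighted αβ-pointwise statistical convergence of order θ on a set `D`. -/
def WPStat {X : Type*} [MetricSpace X] (t A B : ℕ → ℝ) (θ : ℝ) (D : Set ℝ)
    (f : ℕ → ℝ → X) (g : ℝ → X) : Prop :=
  ∀ ε > 0, ∀ x ∈ D, Tendsto (fun n =>
    (({k : ℕ | (k : ℝ) ≤ Tab t A B n ∧ ε ≤ t k * dist (f k x) (g x)}.ncard : ℝ))
      / (Tab t A B n) ^ θ) atTop (𝓝 0)

/-- Weighted αβ-uniform statistical convergence of order θ on a set `D`. -/
def WUStat {X : Type*} [MetricSpace X] (t A B : ℕ → ℝ) (θ : ℝ) (D : Set ℝ)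
    (f : ℕ → ℝ → X) (g : ℝ → X) : Prop :=
  ∀ ε > 0, Tendsto (fun n =>
    (({k : ℕ | (k : ℝ) ≤ Tab t A B n ∧ ∀ x ∈ D, ε ≤ t k * dist (f k x) (g x)}.ncard : ℝ))
      / (Tab t A B n) ^ θ) atTop (𝓝 0)

/-- Weighted αβ-equi-statistical convergence of order θ on a set `D`. -/
def WEStat {X : Type*} [MetricSpace X] (t A B : ℕ → ℝ) (θ : ℝ) (D : Set ℝ)
    (f : ℕ → ℝ → X) (g : ℝ → X) : Prop :=
  ∀ ε > 0, TendstoUniformlyOn (fun m x =>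
    (({k : ℕ | (k : ℝ) ≤ Tab t A B m ∧ ε ≤ t k * dist (f k x) (g x)}.ncard : ℝ))
      / (Tab t A B m) ^ θ) (fun _ => (0 : ℝ)) atTop D

theorem stmt12 {X : Type*} [MetricSpace X] [CompleteSpace X]
    (t A B : ℕ → ℝ) (θ : ℝ) (hθ : 0 < θ) (hθ1 : θ ≤ 1)
    (L M : ℝ) (hL : 0 < L) (htL : ∀ k, L ≤ t k) (htM : ∀ k, t k ≤ M)
    (hA : ∀ n, 0 < A n) (hmA : Monotone A) (hmB : Monotone B)
    (hAB : ∀ n, A n ≤ B n) (hd : Tendsto (fun n => B n - A n) atTop atTop)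
    (a b : ℝ) (f : ℕ → ℝ → X) (F : ℝ → X)
    (hconv : WEStat t A B θ (Set.Icc a b) f F)
    (c : ℝ) (hc : c ∈ Set.Icc a b)
    (hcont : ∀ k, ContinuousWithinAt (f k) (Set.Icc a b) c) :
    ContinuousWithinAt F (Set.Icc a b) c := by
  rw [ContinuousWithinAt, Metric.tendsto_nhds]
  intro ε hε
  set ε₀ := L * ε / 3 with hε₀def
  have hε₀ : 0 < ε₀ := by positivity
  have h1 := (Metric.tendstoUniformlyOn_iff.1 (hconv ε₀ hε₀)) (1/2) (by norm_num)
  have h2 : ∀ᶠ n in atTop, (1:ℝ) ≤ Tab t A B n := by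
    filter_upwards [hd.eventually (eventually_ge_atTop (1/L + 2))] with n hn
    have hA0 : (0:ℝ) ≤ A n := (hA n).le
    have hB0 : (0:ℝ) ≤ B n := le_trans hA0 (hAB n)
    have hmlt : (⌈A n⌉₊ : ℝ) < A n + 1 := Nat.ceil_lt_add_one hA0
    have hMgt : B n - 1 < (⌊B n⌋₊ : ℝ) := Nat.sub_one_lt_floor (B n)
    have hLpos : (0:ℝ) < 1/L := by positivity
    have hmM : ⌈A n⌉₊ ≤ ⌊B n⌋₊ := by
      have : (⌈A n⌉₊ : ℝ) < (⌊B n⌋₊ : ℝ) := by linarith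
      exact_mod_cast this.le
    have hcard : ((Finset.Icc ⌈A n⌉₊ ⌊B n⌋₊).card : ℝ) = (⌊B n⌋₊ : ℝ) + 1 - ⌈A n⌉₊ := by
      rw [Nat.card_Icc, Nat.cast_sub (by omega)]
      push_cast; ring
    have hsum : ((Finset.Icc ⌈A n⌉₊ ⌊B n⌋₊).card : ℝ) * L ≤ Tab t A B n := by
      have := Finset.card_nsmul_le_sum (Finset.Icc ⌈A n⌉₊ ⌊B n⌋₊) t L
        (fun k _ => htL k)
      rw [nsmul_eq_mul] at this
      exact this
    have hcardge : (1/L : ℝ) ≤ ((Finset.Icc ⌈A n⌉₊ ⌊B n⌋₊).card : ℝ) := by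
      rw [hcard]; linarith
    calc (1:ℝ) = (1/L) * L := by field_simp
      _ ≤ ((Finset.Icc ⌈A n⌉₊ ⌊B n⌋₊).card : ℝ) * L :=
          mul_le_mul_of_nonneg_right hcardge hL.le
      _ ≤ Tab t A B n := hsum
  obtain ⟨n, hn1, hn2⟩ := (h1.and h2).exists
  set T := Tab t A B n with hTdef
  have hT0 : (0:ℝ) < T := by linarith
  have hTθpos : (0:ℝ) < T ^ θ := Real.rpow_pos_of_pos hT0 θ
  have hTθle : T ^ θ ≤ T := by
    have := Real.rpow_le_rpow_of_exponent_le hn2 hθ1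
    rwa [Real.rpow_one] at this
  set S : ℝ → Set ℕ := fun x => {k : ℕ | (k : ℝ) ≤ T ∧ ε₀ ≤ t k * dist (f k x) (F x)}
    with hSdef
  have hfin : ∀ x, (S x).Finite := by
    intro x
    exact (Set.finite_Iic ⌊T⌋₊).subset (fun k hk => Nat.le_floor hk.1)
  have hcount : ∀ x ∈ Set.Icc a b, ((S x).ncard : ℝ) < T ^ θ / 2 := by
    intro x hx
    have := hn1 x hx
    rw [Real.dist_eq, abs_sub_comm, sub_zero, abs_of_nonneg (by positivity)] at this
    rw [div_lt_iff₀ hTθpos] at this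
    linarith
  have hIic : ((Set.Iic ⌊T⌋₊).ncard : ℝ) = (⌊T⌋₊ : ℝ) + 1 := by
    rw [← Finset.coe_Iic, Set.ncard_coe_finset, Nat.card_Iic]
    push_cast; ring
  have key : ∀ x ∈ Set.Icc a b, ∃ k : ℕ, (k : ℝ) ≤ T ∧
      t k * dist (f k x) (F x) < ε₀ ∧ t k * dist (f k c) (F c) < ε₀ := by
    intro x hx
    by_contra hcon
    push_neg at hcon
    have hsub : Set.Iic ⌊T⌋₊ ⊆ S x ∪ S c := by
      intro k hk
      have hkT : (k : ℝ) ≤ T :=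
        le_trans (by exact_mod_cast hk) (Nat.floor_le hT0.le)
      rcases le_or_gt ε₀ (t k * dist (f k x) (F x)) with h | h
      · exact Or.inl ⟨hkT, h⟩
      · exact Or.inr ⟨hkT, hcon k hkT h⟩
    have hle : ((Set.Iic ⌊T⌋₊).ncard : ℝ) ≤ ((S x ∪ S c).ncard : ℝ) := by
      exact_mod_cast Set.ncard_le_ncard hsub ((hfin x).union (hfin c))
    have hun : ((S x ∪ S c).ncard : ℝ) ≤ ((S x).ncard : ℝ) + ((S c).ncard : ℝ) := by
      exact_mod_cast Set.ncard_union_le (S x) (S c)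
    have hfl : T < (⌊T⌋₊ : ℝ) + 1 := Nat.lt_floor_add_one T
    have h1 := hcount x hx
    have h2 := hcount c hc
    rw [hIic] at hle
    linarith
  have hK : ∀ᶠ x in 𝓝[Set.Icc a b] c, ∀ k ∈ Finset.Iic ⌊T⌋₊,
      dist (f k x) (f k c) < ε / 3 := by
    rw [Filter.eventually_all_finset]
    intro k _
    exact Metric.tendsto_nhds.1 (hcont k) (ε/3) (by positivity)
  filter_upwards [hK, self_mem_nhdsWithin] with x hx hxD
  obtain ⟨k, hkT, h1x, h1c⟩ := key x hxD
  have hkK : k ∈ Finset.Iic ⌊T⌋₊ := Finset.mem_Iic.2 (Nat.le_floor hkT)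
  have hLk := htL k
  have d1 : dist (f k x) (F x) < ε / 3 := by
    have hmul : L * dist (f k x) (F x) ≤ t k * dist (f k x) (F x) :=
      mul_le_mul_of_nonneg_right hLk dist_nonneg
    have : L * dist (f k x) (F x) < L * (ε/3) := by
      rw [hε₀def] at h1x; linarith
    exact (mul_lt_mul_iff_right₀ hL).1 this
  have d3 : dist (f k c) (F c) < ε / 3 := by
    have hmul : L * dist (f k c) (F c) ≤ t k * dist (f k c) (F c) :=
      mul_le_mul_of_nonneg_right hLk dist_nonneg
    have : L * dist (f k c) (F c) < L * (ε/3) := by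
      rw [hε₀def] at h1c; linarith
    exact (mul_lt_mul_iff_right₀ hL).1 this
  have d2 : dist (f k x) (f k c) < ε / 3 := hx k hkK
  calc dist (F x) (F c)
      ≤ dist (F x) (f k x) + dist (f k x) (f k c) + dist (f k c) (F c) :=
        dist_triangle4 _ _ _ _
    _ < ε := by rw [dist_comm (F x)]; linarith
end

section
/- Let $(f_k)$ be an equi-continuous sequence of functions from $[a,b]$ to a metric space $X$, weighted $\alpha\beta$-pointwise statistically convergent of order $\theta$ to $f$, with weights satisfying $0 < L \le t_n \le M$ for all $n$. Then the limit function $f$ is continuous on $[a,b]$. -/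
open Filter Topology Set

theorem stmt15 {X : Type*} [MetricSpace X]
    (t A B : ℕ → ℝ) (θ : ℝ) (hθ : 0 < θ) (hθ1 : θ ≤ 1)
    (L M : ℝ) (hL : 0 < L) (htL : ∀ k, L ≤ t k) (htM : ∀ k, t k ≤ M)
    (hA : ∀ n, 0 < A n) (hmA : Monotone A) (hmB : Monotone B)
    (hAB : ∀ n, A n ≤ B n) (hd : Tendsto (fun n => B n - A n) atTop atTop)
    (a b : ℝ) (f : ℕ → ℝ → X) (F : ℝ → X)
    (hequi : ∀ ε > 0, ∃ δ > 0, ∀ x ∈ Set.Icc a b, ∀ y ∈ Set.Icc a b,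
      |x - y| < δ → ∀ k, dist (f k x) (f k y) < ε)
    (hconv : WPStat t A B θ (Set.Icc a b) f F) :
    ContinuousOn F (Set.Icc a b) := by
  -- Tab tends to infinity
  have hT : Tendsto (Tab t A B) atTop atTop := by
    apply tendsto_atTop_mono (g := Tab t A B) (f := fun n => L * (B n - A n - 1))
    · intro n
      have hcard : B n - A n - 1 ≤ ((Finset.Icc ⌈A n⌉₊ ⌊B n⌋₊).card : ℝ) := by
        rw [Nat.card_Icc]
        have h1 : (⌈A n⌉₊ : ℝ) ≤ A n + 1 := by
          have := Nat.ceil_lt_add_one (le_of_lt (hA n))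
          linarith
        have h2 : B n - 1 ≤ (⌊B n⌋₊ : ℝ) := by
          have hB : 0 ≤ B n := le_trans (le_of_lt (hA n)) (hAB n)
          have := Nat.lt_floor_add_one (B n)
          linarith
        calc B n - A n - 1 ≤ ((⌊B n⌋₊ : ℝ) + 1) - (⌈A n⌉₊ : ℝ) := by linarith
          _ = ((⌊B n⌋₊ + 1 : ℕ) : ℝ) - ((⌈A n⌉₊ : ℕ) : ℝ) := by push_cast; ring
          _ ≤ ((⌊B n⌋₊ + 1 - ⌈A n⌉₊ : ℕ) : ℝ) := by
            have := Nat.sub_le (⌊B n⌋₊ + 1) ⌈A n⌉₊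
            rcases le_or_gt ⌈A n⌉₊ (⌊B n⌋₊ + 1) with h | h
            · rw [Nat.cast_sub h]
            · push_cast
              have : (⌊B n⌋₊:ℝ) + 1 ≤ ⌈A n⌉₊ := by exact_mod_cast h.le
              have h0 : (0:ℝ) ≤ ((⌊B n⌋₊ + 1 - ⌈A n⌉₊ : ℕ) : ℝ) := Nat.cast_nonneg _
              push_cast at h0 ⊢
              linarith
      have hsum : L * ((Finset.Icc ⌈A n⌉₊ ⌊B n⌋₊).card : ℝ) ≤ Tab t A B n := by
        have := Finset.card_nsmul_le_sum (Finset.Icc ⌈A n⌉₊ ⌊B n⌋₊) t L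
          (fun i _ => htL i)
        simpa [Tab, nsmul_eq_mul, mul_comm] using this
      have := mul_le_mul_of_nonneg_left hcard (le_of_lt hL)
      linarith
    · exact (tendsto_atTop_add_const_right _ (-1) hd).const_mul_atTop hL
  -- key claim: for any ε' > 0 and two points, there is a common good index k
  have key : ∀ ε' > 0, ∀ x ∈ Set.Icc a b, ∀ y ∈ Set.Icc a b,
      ∃ k, t k * dist (f k x) (F x) < ε' ∧ t k * dist (f k y) (F y) < ε' := by
    intro ε' hε' x hx y hy
    by_contra hcon
    push_neg at hcon
    have h1 := hconv ε' hε' x hx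
    have h2 := hconv ε' hε' y hy
    have e1 := h1.eventually (gt_mem_nhds (by norm_num : (0:ℝ) < 1/2))
    have e2 := h2.eventually (gt_mem_nhds (by norm_num : (0:ℝ) < 1/2))
    have e3 := hT.eventually_ge_atTop 1
    obtain ⟨n, ⟨hn1, hn2⟩, hn3⟩ := ((e1.and e2).and e3).exists
    set T := Tab t A B n with hTdef
    have hT0 : (0:ℝ) < T := lt_of_lt_of_le one_pos hn3
    have hTθ : (0:ℝ) < T ^ θ := Real.rpow_pos_of_pos hT0 θ
    set Sx := {k : ℕ | (k : ℝ) ≤ T ∧ ε' ≤ t k * dist (f k x) (F x)} with hSx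
    set Sy := {k : ℕ | (k : ℝ) ≤ T ∧ ε' ≤ t k * dist (f k y) (F y)} with hSy
    have hIic : (Set.Iic ⌊T⌋₊).ncard = ⌊T⌋₊ + 1 := by
      rw [← Finset.coe_Iic, Set.ncard_coe_finset, Nat.card_Iic]
    have hsubx : Sx ⊆ Set.Iic ⌊T⌋₊ := fun k hk =>
      Nat.le_floor hk.1
    have hsuby : Sy ⊆ Set.Iic ⌊T⌋₊ := fun k hk =>
      Nat.le_floor hk.1
    have hfin : (Set.Iic ⌊T⌋₊).Finite := Set.finite_Iic _
    have hcover : Set.Iic ⌊T⌋₊ ⊆ Sx ∪ Sy := by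
      intro k hk
      have hkT : (k : ℝ) ≤ T := le_trans (Nat.cast_le.mpr hk) (Nat.floor_le (le_of_lt hT0))
      rcases le_or_gt ε' (t k * dist (f k x) (F x)) with h | h
      · exact Or.inl ⟨hkT, h⟩
      · exact Or.inr ⟨hkT, hcon k h⟩
    have hx2 : (Sx.ncard : ℝ) < T ^ θ / 2 := by
      rw [div_lt_iff₀ hTθ] at hn1
      linarith
    have hy2 : (Sy.ncard : ℝ) < T ^ θ / 2 := by
      rw [div_lt_iff₀ hTθ] at hn2
      linarith
    have hunion : (Set.Iic ⌊T⌋₊).ncard ≤ Sx.ncard + Sy.ncard :=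
      le_trans (Set.ncard_le_ncard hcover ((hfin.subset hsubx).union (hfin.subset hsuby)))
        (Set.ncard_union_le Sx Sy)
    have hbig : T ≤ ((Set.Iic ⌊T⌋₊).ncard : ℝ) := by
      rw [hIic]
      push_cast
      have := Nat.lt_floor_add_one T
      linarith
    have hsmall : T ^ θ ≤ T := by
      calc T ^ θ ≤ T ^ (1:ℝ) := Real.rpow_le_rpow_of_exponent_le hn3 hθ1
        _ = T := Real.rpow_one T
    have : (((Set.Iic ⌊T⌋₊).ncard : ℕ) : ℝ) ≤ (Sx.ncard : ℝ) + (Sy.ncard : ℝ) := by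
      exact_mod_cast hunion
    linarith
  -- continuity
  rw [Metric.continuousOn_iff]
  intro x hx ε hε
  obtain ⟨δ, hδ, hδ'⟩ := hequi (ε/3) (by linarith)
  refine ⟨δ, hδ, fun y hy hyx => ?_⟩
  obtain ⟨k, hk1, hk2⟩ := key (L * (ε/3)) (by positivity) x hx y hy
  have hd1 : dist (f k x) (F x) < ε/3 := by
    have := mul_le_mul_of_nonneg_right (htL k) (dist_nonneg (x := f k x) (y := F x))
    have hlt : L * dist (f k x) (F x) < L * (ε/3) := lt_of_le_of_lt this hk1
    exact (mul_lt_mul_iff_right₀ hL).mp hlt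
  have hd2 : dist (f k y) (F y) < ε/3 := by
    have := mul_le_mul_of_nonneg_right (htL k) (dist_nonneg (x := f k y) (y := F y))
    have hlt : L * dist (f k y) (F y) < L * (ε/3) := lt_of_le_of_lt this hk2
    exact (mul_lt_mul_iff_right₀ hL).mp hlt
  have hd3 : dist (f k y) (f k x) < ε/3 := by
    apply hδ' y hy x hx _ k
    rwa [← Real.dist_eq]
  calc dist (F y) (F x) ≤ dist (F y) (f k y) + dist (f k y) (f k x) + dist (f k x) (F x) :=
        dist_triangle4 _ _ _ _
    _ < ε/3 + ε/3 + ε/3 := by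
        rw [dist_comm (F y)]
        exact add_lt_add (add_lt_add hd2 hd3) hd1
    _ = ε := by ring
end
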